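/- arXiv:1706.00534 — 2 statements merged into one kernel-verified Lean document; each statement's English description precedes it below -/
import Mathlib

section
/- Assume conditions (B), (C) and (D) hold, and let j ≥ 1 be an integer such that [L_{−2}, L_k] = 0 for all 1 ≤ k ≤ j−1 and [L_{−2}, L_j] ≠ 0. Then [L_{−i}, L_j] ≠ 0 for every i with 1 ≤ i ≤ j+1, and moreover [L_{−j−1}, L_j] = L_{−1}. (Equations (6.3.1) and (6.2) of Section 6.) -/
/- Graded Lie algebra setting: `F` a field of characteristic 3, `A` a
finite-dimensional Lie algebra over `F`, with a `ℤ`-grading `L : ℤ → Submodule F A`. -/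

namespace GradedLie

variable {F A : Type*} [Field F] [CharP F 3] [LieRing A] [LieAlgebra F A]

/-- The linear span of all brackets `⁅u, v⁆` with `u ∈ U`, `v ∈ V`. -/
def bSpan (U V : Submodule F A) : Submodule F A :=
  Submodule.span F {z | ∃ u ∈ U, ∃ v ∈ V, z = ⁅u, v⁆}

/-- `M` is an irreducible `L0`-module under the adjoint action:
`M ≠ 0` and the only `L0`-submodules of `M` are `0` and `M`. -/
def IsIrred (L0 M : Submodule F A) : Prop :=
  M ≠ ⊥ ∧ ∀ V ≤ M, bSpan L0 V ≤ V → V = ⊥ ∨ V = M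

end GradedLie

/-! The Jacobi identity `[[U, V], W] ⊆ [U, [V, W]] + [V, [U, W]]` drives everything. With (D) it
propagates `[L (-2), L k] = 0` for `k < j` to `[L (-m), L k] = 0` for `2 ≤ m ≤ k + 1`, by induction
on `m`. If `[L (-i-1), L j] = 0` for some `2 ≤ i ≤ j`, it then gives `[[L (-i), L j], L (-1)] = 0`,
so `[L (-i), L j] = 0` by transitivity (C); descending to `i = 2` contradicts `[L (-2), L j] ≠ 0`,
and `[L (-1), L j] = 0` would even force `L j = 0`. Finally `[L (-j-1), L j]` is a nonzero
`L 0`-submodule of `L (-1)`, hence equal to it by (B). -/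

namespace GradedLie

section

variable {F A : Type*} [Field F] [LieRing A] [LieAlgebra F A]

section BracketSpan

variable {U V W : Submodule F A}

lemma lie_mem_bSpan {u v : A} (hu : u ∈ U) (hv : v ∈ V) : ⁅u, v⁆ ∈ bSpan U V :=
  Submodule.subset_span ⟨u, hu, v, hv, rfl⟩

lemma bSpan_le_iff : bSpan U V ≤ W ↔ ∀ u ∈ U, ∀ v ∈ V, ⁅u, v⁆ ∈ W := by
  refine ⟨fun h u hu v hv => h (lie_mem_bSpan hu hv), fun h => ?_⟩
  rw [bSpan, Submodule.span_le]
  rintro _ ⟨u, hu, v, hv, rfl⟩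
  exact h u hu v hv

lemma bSpan_mono {U' V' : Submodule F A} (hU : U ≤ U') (hV : V ≤ V') :
    bSpan U V ≤ bSpan U' V' :=
  bSpan_le_iff.2 fun _ hu _ hv => lie_mem_bSpan (hU hu) (hV hv)

lemma bSpan_comm (U V : Submodule F A) : bSpan U V = bSpan V U := by
  suffices ∀ U V : Submodule F A, bSpan U V ≤ bSpan V U from le_antisymm (this U V) (this V U)
  refine fun U V => bSpan_le_iff.2 fun u hu v hv => ?_
  rw [← lie_skew]
  exact neg_mem (lie_mem_bSpan hv hu)

@[simp]
lemma bSpan_bot_right (U : Submodule F A) : bSpan U ⊥ = ⊥ :=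
  le_bot_iff.1 <| bSpan_le_iff.2 fun u _ v hv => by simp [(Submodule.mem_bot F).1 hv]

lemma bSpan_bSpan_le :
    bSpan (bSpan U V) W ≤ bSpan U (bSpan V W) ⊔ bSpan V (bSpan U W) := by
  refine bSpan_le_iff.2 fun x hx w hw => ?_
  -- `x ↦ ⁅x, w⁆` is linear, so it suffices to treat the generators `x = ⁅u, v⁆`.
  suffices bSpan U V ≤ (bSpan U (bSpan V W) ⊔ bSpan V (bSpan U W)).comap
      ((LieModule.toEnd F A A : A →ₗ[F] Module.End F A).flip w) from this hx
  refine bSpan_le_iff.2 fun u hu v hv => ?_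
  simp only [Submodule.mem_comap, LinearMap.flip_apply, LieHom.coe_toLinearMap,
    LieModule.toEnd_apply_apply, lie_lie]
  exact sub_mem (Submodule.mem_sup_left (lie_mem_bSpan hu (lie_mem_bSpan hv hw)))
    (Submodule.mem_sup_right (lie_mem_bSpan hv (lie_mem_bSpan hu hw)))

lemma IsIrred.eq_of_le {L0 M : Submodule F A} (hM : IsIrred L0 M) (hVM : V ≤ M)
    (hV : bSpan L0 V ≤ V) (hne : V ≠ ⊥) : V = M :=
  (hM.2 V hVM hV).resolve_left hne

end BracketSpan

section Graded

variable {L : ℤ → Submodule F A}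

lemma bSpan_le_of_add_eq (hgrade : ∀ i j : ℤ, ∀ x ∈ L i, ∀ y ∈ L j, ⁅x, y⁆ ∈ L (i + j))
    {a b c : ℤ} (h : a + b = c) : bSpan (L a) (L b) ≤ L c :=
  bSpan_le_iff.2 fun x hx y hy => h ▸ hgrade a b x hx y hy

lemma bSpan_zero_bSpan_le (hgrade : ∀ i j : ℤ, ∀ x ∈ L i, ∀ y ∈ L j, ⁅x, y⁆ ∈ L (i + j))
    (a b : ℤ) : bSpan (L 0) (bSpan (L a) (L b)) ≤ bSpan (L a) (L b) := by
  rw [bSpan_comm (L 0)]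
  refine bSpan_bSpan_le.trans (sup_le ?_ ?_)
  · exact bSpan_mono le_rfl (bSpan_le_of_add_eq hgrade (add_zero b))
  · rw [bSpan_comm (L b)]
    exact bSpan_mono (bSpan_le_of_add_eq hgrade (add_zero a)) le_rfl

lemma neg_sub_one_eq_bSpan (hD : ∀ i : ℤ, 1 < i → L (-i) = bSpan (L (-i + 1)) (L (-1)))
    {m : ℤ} (hm : 1 ≤ m) : L (-m - 1) = bSpan (L (-m)) (L (-1)) := by
  have := hD (m + 1) (by omega)
  rwa [neg_add', sub_add_cancel] at this

lemma eq_bot_of_bSpan_neg_one_eq_bot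
    (hC : ∀ j' : ℤ, 0 ≤ j' → ∀ x ∈ L j', (∀ y ∈ L (-1), ⁅x, y⁆ = 0) → x = 0)
    {W : Submodule F A} {k : ℤ} (hk : 0 ≤ k) (hWk : W ≤ L k) (hW : bSpan W (L (-1)) = ⊥) :
    W = ⊥ :=
  (Submodule.eq_bot_iff W).2 fun x hx => hC k hk x (hWk hx) fun _ hy =>
    (Submodule.mem_bot F).1 (hW ▸ lie_mem_bSpan hx hy)

lemma bSpan_neg_eq_bot (hgrade : ∀ i j : ℤ, ∀ x ∈ L i, ∀ y ∈ L j, ⁅x, y⁆ ∈ L (i + j))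
    (hD : ∀ i : ℤ, 1 < i → L (-i) = bSpan (L (-i + 1)) (L (-1))) {n : ℤ}
    (h0 : ∀ k : ℤ, 1 ≤ k → k ≤ n → bSpan (L (-2)) (L k) = ⊥) {m : ℤ} (hm : 2 ≤ m) :
    ∀ k ≤ n, m ≤ k + 1 → bSpan (L (-m)) (L k) = ⊥ := by
  induction m, hm using Int.leInduction with
  | base => exact fun k hkn hk => h0 k (by omega) hkn
  | succ m hm ih =>
    intro k hkn hmk
    rw [neg_add', neg_sub_one_eq_bSpan hD (by omega), ← le_bot_iff]
    refine bSpan_bSpan_le.trans (sup_le ?_ ?_)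
    · calc bSpan (L (-m)) (bSpan (L (-1)) (L k))
          ≤ bSpan (L (-m)) (L (k - 1)) :=
            bSpan_mono le_rfl (bSpan_le_of_add_eq hgrade (by ring))
        _ = ⊥ := ih (k - 1) (by omega) (by omega)
    · rw [ih k hkn (by omega), bSpan_bot_right]

lemma bSpan_eq_bot_of_bSpan_neg_sub_one_eq_bot
    (hgrade : ∀ i j : ℤ, ∀ x ∈ L i, ∀ y ∈ L j, ⁅x, y⁆ ∈ L (i + j))
    (hC : ∀ j' : ℤ, 0 ≤ j' → ∀ x ∈ L j', (∀ y ∈ L (-1), ⁅x, y⁆ = 0) → x = 0)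
    (hD : ∀ i : ℤ, 1 < i → L (-i) = bSpan (L (-i + 1)) (L (-1))) {i j : ℤ} (hi : 1 ≤ i)
    (hij : i ≤ j) (hprev : bSpan (L (-i)) (L (j - 1)) = ⊥) (h : bSpan (L (-i - 1)) (L j) = ⊥) :
    bSpan (L (-i)) (L j) = ⊥ := by
  refine eq_bot_of_bSpan_neg_one_eq_bot hC (k := j - i) (by omega)
    (bSpan_le_of_add_eq hgrade (by ring)) ?_
  rw [← le_bot_iff]
  refine bSpan_bSpan_le.trans (sup_le ?_ ?_)
  · calc bSpan (L (-i)) (bSpan (L j) (L (-1)))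
        ≤ bSpan (L (-i)) (L (j - 1)) := bSpan_mono le_rfl (bSpan_le_of_add_eq hgrade (by ring))
      _ = ⊥ := hprev
  · rw [← neg_sub_one_eq_bSpan hD hi, bSpan_comm, h]

end Graded

end

variable {F A : Type*} [Field F] [CharP F 3] [LieRing A] [LieAlgebra F A]

theorem eq_6_3_1_and_6_2_general
    (L : ℤ → Submodule F A)
    (hgrade : ∀ i j : ℤ, ∀ x ∈ L i, ∀ y ∈ L j, ⁅x, y⁆ ∈ L (i + j))
    (hB : IsIrred (L 0) (L (-1)))
    (hC : ∀ j' : ℤ, 0 ≤ j' → ∀ x ∈ L j', (∀ y ∈ L (-1), ⁅x, y⁆ = 0) → x = 0)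
    (hD : ∀ i : ℤ, 1 < i → L (-i) = bSpan (L (-i + 1)) (L (-1)))
    (j : ℤ) (hj : 1 ≤ j)
    (h0 : ∀ k : ℤ, 1 ≤ k → k ≤ j - 1 → bSpan (L (-2)) (L k) = ⊥)
    (hne : bSpan (L (-2)) (L j) ≠ ⊥) :
    (∀ i : ℤ, 1 ≤ i → i ≤ j + 1 → bSpan (L (-i)) (L j) ≠ ⊥) ∧
    bSpan (L (-j - 1)) (L j) = L (-1) := by
  have hone : bSpan (L (-1)) (L j) ≠ ⊥ := fun h => hne <| by
    rw [eq_bot_of_bSpan_neg_one_eq_bot hC (k := j) (by omega) le_rfl (by rw [bSpan_comm, h]),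
      bSpan_bot_right]
  have htwo : ∀ i, 2 ≤ i → i ≤ j + 1 → bSpan (L (-i)) (L j) ≠ ⊥ := by
    intro i hi
    induction i, hi using Int.leInduction with
    | base => exact fun _ => hne
    | succ i hi ih =>
      intro hij h
      rw [neg_add'] at h
      exact ih (by omega) <| bSpan_eq_bot_of_bSpan_neg_sub_one_eq_bot hgrade hC hD (by omega)
        (by omega) (bSpan_neg_eq_bot hgrade hD h0 hi (j - 1) le_rfl (by omega)) h
  refine ⟨fun i hi hij => ?_, ?_⟩
  · obtain rfl | hi := hi.eq_or_lt
    exacts [hone, htwo i hi hij]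
  · refine hB.eq_of_le (bSpan_le_of_add_eq hgrade (by ring)) (bSpan_zero_bSpan_le hgrade _ _) ?_
    rw [← neg_add']
    exact htwo (j + 1) (by omega) le_rfl

/-- Equations (6.3.1) and (6.2): under (B), (C), (D), if `j ≥ 1`,
`[L (-2), L k] = 0` for `1 ≤ k ≤ j-1`, and `[L (-2), L j] ≠ 0`, then
`[L (-i), L j] ≠ 0` for `1 ≤ i ≤ j+1`, and `[L (-j-1), L j] = L (-1)`. -/
theorem eq_6_3_1_and_6_2
    [FiniteDimensional F A]
    (L : ℤ → Submodule F A)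
    (hdecomp : DirectSum.IsInternal L)
    (hgrade : ∀ i j : ℤ, ∀ x ∈ L i, ∀ y ∈ L j, ⁅x, y⁆ ∈ L (i + j))
    (q r : ℤ) (hq : 1 ≤ q) (hr : 1 ≤ r)
    (hbound : ∀ i : ℤ, i < -q ∨ r < i → L i = ⊥)
    (hbot : L (-q) ≠ ⊥)
    (hB : IsIrred (L 0) (L (-1)))
    (hC : ∀ j' : ℤ, 0 ≤ j' → ∀ x ∈ L j', (∀ y ∈ L (-1), ⁅x, y⁆ = 0) → x = 0)
    (hD : ∀ i : ℤ, 1 < i → L (-i) = bSpan (L (-i + 1)) (L (-1)))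
    (j : ℤ) (hj : 1 ≤ j)
    (h0 : ∀ k : ℤ, 1 ≤ k → k ≤ j - 1 → bSpan (L (-2)) (L k) = ⊥)
    (hne : bSpan (L (-2)) (L j) ≠ ⊥) :
    (∀ i : ℤ, 1 ≤ i → i ≤ j + 1 → bSpan (L (-i)) (L j) ≠ ⊥) ∧
    bSpan (L (-j - 1)) (L j) = L (-1) :=
  eq_6_3_1_and_6_2_general L hgrade hB hC hD j hj h0 hne

end GradedLie
end

section
/- Assume q = 5 and r ≥ 5 with L_5 ≠ 0; assume conditions (B), (C), (D), (vi) and (F1) hold, that L_1 is an irreducible L_0-module, that for every i > 0 and every nonzero x ∈ L_i one has [x, L_{−5}] ≠ 0, and that [L_{−2}, L_{−3}] = L_{−5}. Then: [L_{−4}, L_5] = L_1; L_{−2} is an irreducible L_0-module; and [L_{−2}, L_{−2}] = L_{−4}. (Equations (5.1), (5.11) and (5.12) of Section 5, the depth-five case.) -/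
set_option linter.unusedSectionVars false


/- Graded Lie algebra setting: `F` a field of characteristic 3, `A` a
finite-dimensional Lie algebra over `F`, with a `ℤ`-grading `L : ℤ → Submodule F A`. -/

namespace GradedLie

variable {F A : Type*} [Field F] [CharP F 3] [LieRing A] [LieAlgebra F A]

theorem mem_bSpan {U V : Submodule F A} {u v : A} (hu : u ∈ U) (hv : v ∈ V) :
    ⁅u, v⁆ ∈ bSpan U V :=
  Submodule.subset_span ⟨u, hu, v, hv, rfl⟩

theorem bSpan_le {U V W : Submodule F A} (h : ∀ u ∈ U, ∀ v ∈ V, ⁅u, v⁆ ∈ W) :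
    bSpan U V ≤ W := by
  rw [bSpan, Submodule.span_le]
  rintro z ⟨u, hu, v, hv, rfl⟩
  exact h u hu v hv

/-- Elements `z` with `⁅z, t⁆ ∈ W` for all `t ∈ T`. -/
def brkR (T W : Submodule F A) : Submodule F A where
  carrier := {z : A | ∀ t ∈ T, ⁅z, t⁆ ∈ W}
  add_mem' := by
    intro a b ha hb t ht
    rw [add_lie]
    exact W.add_mem (ha t ht) (hb t ht)
  zero_mem' := by
    intro t ht
    rw [zero_lie]
    exact W.zero_mem
  smul_mem' := by
    intro c a ha t ht
    rw [smul_lie]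
    exact W.smul_mem c (ha t ht)

/-- Elements `z` with `⁅t, z⁆ ∈ W` for all `t ∈ T`. -/
def brkL (T W : Submodule F A) : Submodule F A where
  carrier := {z : A | ∀ t ∈ T, ⁅t, z⁆ ∈ W}
  add_mem' := by
    intro a b ha hb t ht
    rw [lie_add]
    exact W.add_mem (ha t ht) (hb t ht)
  zero_mem' := by
    intro t ht
    rw [lie_zero]
    exact W.zero_mem
  smul_mem' := by
    intro c a ha t ht
    rw [lie_smul]
    exact W.smul_mem c (ha t ht)

theorem bSpan_eq_bot_apply {U V : Submodule F A} (h : bSpan U V = ⊥)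
    {u v : A} (hu : u ∈ U) (hv : v ∈ V) : ⁅u, v⁆ = 0 := by
  have hm := mem_bSpan hu hv
  rw [h, Submodule.mem_bot] at hm
  exact hm

theorem bSpan_stab {Z U V : Submodule F A} (hU : bSpan Z U ≤ U) (hV : bSpan Z V ≤ V) :
    bSpan Z (bSpan U V) ≤ bSpan U V := by
  have key : bSpan U V ≤ brkL Z (bSpan U V) := by
    apply bSpan_le
    intro u hu v hv t ht
    rw [leibniz_lie]
    exact Submodule.add_mem _ (mem_bSpan (hU (mem_bSpan ht hu)) hv)
      (mem_bSpan hu (hV (mem_bSpan ht hv)))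
  apply bSpan_le
  intro h hh s hs
  exact (key hs) h hh

theorem bSpan_bot_left (V : Submodule F A) : bSpan (⊥ : Submodule F A) V = ⊥ := by
  apply le_bot_iff.mp
  apply bSpan_le
  intro u hu v _
  rw [Submodule.mem_bot] at hu
  rw [hu, zero_lie]
  exact Submodule.zero_mem ⊥

/-- The depth-five case (Section 5), equations (5.1), (5.11), (5.12): if `q = 5`,
`r ≥ 5`, `L 5 ≠ 0`, (B), (C), (D), (vi), (F1) hold, `L 1` is irreducible, every
nonzero `x ∈ L i` (`i > 0`) has `[x, L (-5)] ≠ 0`, and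
`[L (-2), L (-3)] = L (-5)`, then `[L (-4), L 5] = L 1`, `L (-2)` is an
irreducible `L 0`-module, and `[L (-2), L (-2)] = L (-4)`. -/
theorem depth_five_case
    [FiniteDimensional F A]
    (L : ℤ → Submodule F A)
    (hdecomp : DirectSum.IsInternal L)
    (hgrade : ∀ i j : ℤ, ∀ x ∈ L i, ∀ y ∈ L j, ⁅x, y⁆ ∈ L (i + j))
    (q r : ℤ) (hq : 1 ≤ q) (hr : 1 ≤ r)
    (hbound : ∀ i : ℤ, i < -q ∨ r < i → L i = ⊥)
    (hbot : L (-q) ≠ ⊥)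
    (hq5 : q = 5) (hr5 : 5 ≤ r) (hL5 : L 5 ≠ ⊥)
    (hB : IsIrred (L 0) (L (-1)))
    (hC : ∀ j : ℤ, 0 ≤ j → ∀ x ∈ L j, (∀ y ∈ L (-1), ⁅x, y⁆ = 0) → x = 0)
    (hD : ∀ i : ℤ, 1 < i → L (-i) = bSpan (L (-i + 1)) (L (-1)))
    (hvi : ∀ i : ℤ, 0 ≤ i → ∀ x ∈ L (-i), x ≠ 0 → ∃ y ∈ L 1, ⁅y, x⁆ ≠ 0)
    (hF1 : ∀ i : ℤ, -q < i → ∀ x ∈ L i, x ≠ 0 → ∃ y ∈ L (-1), ⁅y, x⁆ ≠ 0)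
    (hL1irr : IsIrred (L 0) (L 1))
    (hann : ∀ i : ℤ, 0 < i → ∀ x ∈ L i, x ≠ 0 → ∃ y ∈ L (-5), ⁅x, y⁆ ≠ 0)
    (h1 : bSpan (L (-2)) (L (-3)) = L (-5)) :
    bSpan (L (-4)) (L 5) = L 1 ∧
    IsIrred (L 0) (L (-2)) ∧
    bSpan (L (-2)) (L (-2)) = L (-4) := by
  subst hq5
  -- elementwise grading with recast of the degree
  have hLmem : ∀ {i j k : ℤ} {x y : A}, x ∈ L i → y ∈ L j → i + j = k → ⁅x, y⁆ ∈ L k := by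
    intro i j k x y hx hy hk
    exact hk ▸ hgrade i j x hx y hy
  -- brackets landing below degree -5 vanish
  have hzero : ∀ {i j : ℤ} {x y : A}, x ∈ L i → y ∈ L j → i + j < -5 → ⁅x, y⁆ = 0 := by
    intro i j x y hx hy hij
    have h' := hgrade i j x hx y hy
    rw [hbound (i + j) (Or.inl hij), Submodule.mem_bot] at h'
    exact h'
  have stabL : ∀ i : ℤ, bSpan (L 0) (L i) ≤ L i := by
    intro i
    apply bSpan_le
    intro h hh x hx
    have h' := hgrade 0 i h hh x hx
    rwa [zero_add] at h'
  have hD5 : L (-5) = bSpan (L (-4)) (L (-1)) := by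
    have h := hD 5 (by norm_num)
    norm_num at h
    exact h
  have hD4 : L (-4) = bSpan (L (-3)) (L (-1)) := by
    have h := hD 4 (by norm_num)
    norm_num at h
    exact h
  have hD3 : L (-3) = bSpan (L (-2)) (L (-1)) := by
    have h := hD 3 (by norm_num)
    norm_num at h
    exact h
  have hD2 : L (-2) = bSpan (L (-1)) (L (-1)) := by
    have h := hD 2 (by norm_num)
    norm_num at h
    exact h
  have hbot5 : L (-5) ≠ ⊥ := hbot
  have hm4 : L (-4) ≠ ⊥ := by
    intro h
    exact hbot5 (by rw [hD5, h, bSpan_bot_left])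
  have hm3 : L (-3) ≠ ⊥ := by
    intro h
    exact hm4 (by rw [hD4, h, bSpan_bot_left])
  have hm2 : L (-2) ≠ ⊥ := by
    intro h
    exact hm3 (by rw [hD3, h, bSpan_bot_left])
  -- ============ (5.1) ============
  have hS1 : bSpan (L (-4)) (L 5) = L 1 := by
    have hS_le : bSpan (L (-4)) (L 5) ≤ L 1 :=
      bSpan_le fun u hu x hx => hLmem hu hx (by norm_num)
    rcases hL1irr.2 _ hS_le (bSpan_stab (stabL _) (stabL _)) with hS0 | hS1
    · exfalso
      have hxu : ∀ {x u : A}, x ∈ L 5 → u ∈ L (-4) → ⁅x, u⁆ = 0 := by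
        intro x u hx hu
        rw [← lie_skew, bSpan_eq_bot_apply hS0 hu hx, neg_zero]
      -- T := [L5, L(-3)] annihilates L(-4)
      have hT4 : bSpan (L 5) (L (-3)) ≤ brkR (L (-4)) ⊥ := by
        apply bSpan_le
        intro x hx b hb
        intro u hu
        rw [Submodule.mem_bot, lie_lie, hzero hb hu (by norm_num), hxu hx hu,
          lie_zero, lie_zero, sub_zero]
      -- (10): [T, L(-3)] = 0
      have hT31 : bSpan (bSpan (L 5) (L (-3))) (L (-3)) = ⊥ := by
        have hT_le : bSpan (L 5) (L (-3)) ≤ L 2 :=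
          bSpan_le fun x hx b hb => hLmem hx hb (by norm_num)
        have hN_le : bSpan (bSpan (L 5) (L (-3))) (L (-3)) ≤ L (-1) :=
          bSpan_le fun t ht b hb => hLmem (hT_le ht) hb (by norm_num)
        have hN_stab := bSpan_stab (F := F) (A := A)
          (bSpan_stab (stabL 5) (stabL (-3))) (stabL (-3))
        rcases hB.2 _ hN_le hN_stab with h | h
        · exact h
        · exfalso
          have hann4 : L (-1) ≤ brkR (L (-4)) ⊥ := by
            rw [← h]
            apply bSpan_le
            intro t ht b hb u hu
            have h2 : ⁅t, u⁆ = 0 := Submodule.mem_bot F |>.mp ((hT4 ht) u hu)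
            rw [Submodule.mem_bot, lie_lie, hzero hb hu (by norm_num), h2,
              lie_zero, lie_zero, sub_zero]
          apply hbot5
          rw [hD5]
          apply le_bot_iff.mp
          apply bSpan_le
          intro u hu v hv
          have h3 : ⁅v, u⁆ = 0 := Submodule.mem_bot F |>.mp ((hann4 hv) u hu)
          rw [Submodule.mem_bot, ← lie_skew, h3, neg_zero]
      have hT3 : ∀ {t b : A}, t ∈ bSpan (L 5) (L (-3)) → b ∈ L (-3) → ⁅t, b⁆ = 0 :=
        fun ht hb => bSpan_eq_bot_apply hT31 ht hb
      by_cases hT : bSpan (L 5) (L (-3)) = ⊥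
      · -- case T = 0
        obtain ⟨x₀, hx₀, hx₀ne⟩ := (Submodule.ne_bot_iff _).mp hL5
        obtain ⟨w₀, hw₀, hzne⟩ := hann 5 (by norm_num) x₀ hx₀ hx₀ne
        have hz0 : ⁅x₀, w₀⁆ ∈ L 0 := hLmem hx₀ hw₀ (by norm_num)
        obtain ⟨y, hy, hyz⟩ := hvi 0 le_rfl ⁅x₀, w₀⁆ (by rw [neg_zero]; exact hz0) hzne
        have hyw : ⁅y, w₀⁆ ∈ L (-4) := hLmem hy hw₀ (by norm_num)
        have hkey : ⁅y, ⁅x₀, w₀⁆⁆ = ⁅⁅y, x₀⁆, w₀⁆ := by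
          rw [leibniz_lie, hxu hx₀ hyw, add_zero]
        have hG_le : bSpan (bSpan (L 1) (L 5)) (L (-5)) ≤ L 1 := by
          have h6 : bSpan (L 1) (L 5) ≤ L 6 :=
            bSpan_le fun y' hy' x hx => hLmem hy' hx (by norm_num)
          exact bSpan_le fun ξ hξ w hw => hLmem (h6 hξ) hw (by norm_num)
        have hG_ne : bSpan (bSpan (L 1) (L 5)) (L (-5)) ≠ ⊥ := by
          intro h
          have hmem : ⁅⁅y, x₀⁆, w₀⁆ = 0 :=
            bSpan_eq_bot_apply h (mem_bSpan hy hx₀) hw₀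
          exact hyz (hkey.trans hmem)
        have hG_stab := bSpan_stab (F := F) (A := A)
          (bSpan_stab (stabL 1) (stabL 5)) (stabL (-5))
        have hG1 : bSpan (bSpan (L 1) (L 5)) (L (-5)) = L 1 :=
          (hL1irr.2 _ hG_le hG_stab).resolve_left hG_ne
        have hInner : bSpan (L 1) (L 5) ≤ brkR (L (-4)) ⊥ := by
          apply bSpan_le
          intro y' hy' x' hx' u hu
          have h1 : ⁅y', u⁆ ∈ L (-3) := hLmem hy' hu (by norm_num)
          have h2 : ⁅x', ⁅y', u⁆⁆ = 0 := bSpan_eq_bot_apply hT hx' h1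
          rw [Submodule.mem_bot, lie_lie, hxu hx' hu, h2, lie_zero, sub_zero]
        have hGann : bSpan (bSpan (L 1) (L 5)) (L (-5)) ≤ brkR (L (-4)) ⊥ := by
          apply bSpan_le
          intro ξ hξ w hw u hu
          have hh1 : ⁅w, u⁆ = 0 := hzero hw hu (by norm_num)
          have hh2 : ⁅ξ, u⁆ = 0 := Submodule.mem_bot F |>.mp ((hInner hξ) u hu)
          rw [Submodule.mem_bot, lie_lie, hh1, hh2, lie_zero, lie_zero, sub_zero]
        obtain ⟨u₀, hu₀, hu₀ne⟩ := (Submodule.ne_bot_iff _).mp hm4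
        obtain ⟨y₁, hy₁, hy₁ne⟩ := hvi 4 (by norm_num) u₀ hu₀ hu₀ne
        have hy₁G : y₁ ∈ bSpan (bSpan (L 1) (L 5)) (L (-5)) := by rw [hG1]; exact hy₁
        exact hy₁ne (Submodule.mem_bot F |>.mp ((hGann hy₁G) u₀ hu₀))
      · -- case T ≠ 0
        have hT_le : bSpan (L 5) (L (-3)) ≤ L 2 :=
          bSpan_le fun x hx b hb => hLmem hx hb (by norm_num)
        have hK_le : bSpan (bSpan (L 5) (L (-3))) (L (-1)) ≤ L 1 :=
          bSpan_le fun t ht v hv => hLmem (hT_le ht) hv (by norm_num)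
        have hK_stab := bSpan_stab (F := F) (A := A)
          (bSpan_stab (stabL 5) (stabL (-3))) (stabL (-1))
        have hK_ne : bSpan (bSpan (L 5) (L (-3))) (L (-1)) ≠ ⊥ := by
          intro hK0
          apply hT
          apply le_bot_iff.mp
          intro t ht
          rw [Submodule.mem_bot]
          apply hC 2 (by norm_num) t (hT_le ht)
          intro v hv
          exact bSpan_eq_bot_apply hK0 ht hv
        have hK1 : bSpan (bSpan (L 5) (L (-3))) (L (-1)) = L 1 :=
          (hL1irr.2 _ hK_le hK_stab).resolve_left hK_ne
        have hKann : bSpan (bSpan (L 5) (L (-3))) (L (-1)) ≤ brkR (L (-3)) ⊥ := by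
          apply bSpan_le
          intro t ht v hv b hb
          have hh1 : ⁅v, b⁆ ∈ L (-4) := hLmem hv hb (by norm_num)
          have hh2 : ⁅t, ⁅v, b⁆⁆ = 0 := Submodule.mem_bot F |>.mp ((hT4 ht) _ hh1)
          have hh3 : ⁅t, b⁆ = 0 := hT3 ht hb
          rw [Submodule.mem_bot, lie_lie, hh2, hh3, lie_zero, sub_zero]
        obtain ⟨b₀, hb₀, hb₀ne⟩ := (Submodule.ne_bot_iff _).mp hm3
        obtain ⟨y₁, hy₁, hy₁ne⟩ := hvi 3 (by norm_num) b₀ hb₀ hb₀ne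
        have hy₁K : y₁ ∈ bSpan (bSpan (L 5) (L (-3))) (L (-1)) := by rw [hK1]; exact hy₁
        exact hy₁ne (Submodule.mem_bot F |>.mp ((hKann hy₁K) b₀ hb₀))
    · exact hS1
  -- ============ the chain [L(-5), L j] = L (j-5) ============
  have hQ4 : bSpan (L (-5)) (L 4) = L (-1) := by
    have hle : bSpan (L (-5)) (L 4) ≤ L (-1) :=
      bSpan_le fun w hw η hη => hLmem hw hη (by norm_num)
    rcases hB.2 _ hle (bSpan_stab (stabL _) (stabL _)) with h | h
    · exfalso
      obtain ⟨x₀, hx₀, hx₀ne⟩ := (Submodule.ne_bot_iff _).mp hL5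
      obtain ⟨v, hv, hvx⟩ := hF1 5 (by norm_num) x₀ hx₀ hx₀ne
      have hξ : ⁅v, x₀⁆ ∈ L 4 := hLmem hv hx₀ (by norm_num)
      obtain ⟨w, hw, hww⟩ := hann 4 (by norm_num) ⁅v, x₀⁆ hξ hvx
      apply hww
      rw [← lie_skew, bSpan_eq_bot_apply h hw hξ, neg_zero]
    · exact h
  have hQ3 : bSpan (L (-5)) (L 3) = L (-2) := by
    have hle : bSpan (L (-5)) (L 3) ≤ L (-2) :=
      bSpan_le fun w hw ρ hρ => hLmem hw hρ (by norm_num)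
    refine le_antisymm hle ?_
    rw [hD2]
    apply bSpan_le
    intro v hv v' hv'
    have hv'' : v ∈ bSpan (L (-5)) (L 4) := by rw [hQ4]; exact hv
    have hind : bSpan (L (-5)) (L 4) ≤ brkR (L (-1)) (bSpan (L (-5)) (L 3)) := by
      apply bSpan_le
      intro w hw η hη v₁ hv₁
      have hh1 : ⁅η, v₁⁆ ∈ L 3 := hLmem hη hv₁ (by norm_num)
      have hh2 : ⁅w, v₁⁆ = 0 := hzero hw hv₁ (by norm_num)
      rw [lie_lie, hh2, lie_zero, sub_zero]
      exact mem_bSpan hw hh1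
    exact (hind hv'') v' hv'
  have hQ2 : bSpan (L (-5)) (L 2) = L (-3) := by
    have hle : bSpan (L (-5)) (L 2) ≤ L (-3) :=
      bSpan_le fun w hw ρ hρ => hLmem hw hρ (by norm_num)
    refine le_antisymm hle ?_
    rw [hD3]
    apply bSpan_le
    intro a ha v hv
    have ha' : a ∈ bSpan (L (-5)) (L 3) := by rw [hQ3]; exact ha
    have hind : bSpan (L (-5)) (L 3) ≤ brkR (L (-1)) (bSpan (L (-5)) (L 2)) := by
      apply bSpan_le
      intro w hw ρ hρ v₁ hv₁
      have hh1 : ⁅ρ, v₁⁆ ∈ L 2 := hLmem hρ hv₁ (by norm_num)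
      have hh2 : ⁅w, v₁⁆ = 0 := hzero hw hv₁ (by norm_num)
      rw [lie_lie, hh2, lie_zero, sub_zero]
      exact mem_bSpan hw hh1
    exact (hind ha') v hv
  have hQ1 : bSpan (L (-5)) (L 1) = L (-4) := by
    have hle : bSpan (L (-5)) (L 1) ≤ L (-4) :=
      bSpan_le fun w hw ρ hρ => hLmem hw hρ (by norm_num)
    refine le_antisymm hle ?_
    rw [hD4]
    apply bSpan_le
    intro b hb v hv
    have hb' : b ∈ bSpan (L (-5)) (L 2) := by rw [hQ2]; exact hb
    have hind : bSpan (L (-5)) (L 2) ≤ brkR (L (-1)) (bSpan (L (-5)) (L 1)) := by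
      apply bSpan_le
      intro w hw ρ hρ v₁ hv₁
      have hh1 : ⁅ρ, v₁⁆ ∈ L 1 := hLmem hρ hv₁ (by norm_num)
      have hh2 : ⁅w, v₁⁆ = 0 := hzero hw hv₁ (by norm_num)
      rw [lie_lie, hh2, lie_zero, sub_zero]
      exact mem_bSpan hw hh1
    exact (hind hb') v hv
  -- ============ (5.12) ============
  have hDle : bSpan (L (-2)) (L (-2)) ≤ L (-4) :=
    bSpan_le fun a ha a' ha' => hLmem ha ha' (by norm_num)
  have hR : bSpan (L (-2)) (L 1) = L (-1) := by
    have hle : bSpan (L (-2)) (L 1) ≤ L (-1) :=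
      bSpan_le fun a ha y hy => hLmem ha hy (by norm_num)
    rcases hB.2 _ hle (bSpan_stab (stabL _) (stabL _)) with h | h
    · exfalso
      obtain ⟨a₀, ha₀, ha₀ne⟩ := (Submodule.ne_bot_iff _).mp hm2
      obtain ⟨y, hy, hyne⟩ := hvi 2 (by norm_num) a₀ ha₀ ha₀ne
      apply hyne
      rw [← lie_skew, bSpan_eq_bot_apply h ha₀ hy, neg_zero]
    · exact h
  have hDne : bSpan (L (-2)) (L (-2)) ≠ ⊥ := by
    intro hD0
    have h33 : ∀ {a a' x : A}, a ∈ L (-2) → a' ∈ L (-2) → x ∈ L 5 → ⁅a, ⁅a', x⁆⁆ = 0 := by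
      intro a a' x ha ha' hx
      have hκin : ⁅a', x⁆ ∈ L 3 := hLmem (k := 3) ha' hx (by norm_num)
      have hκ : ⁅a, ⁅a', x⁆⁆ ∈ L 1 := hLmem ha hκin (by norm_num)
      by_contra hne
      obtain ⟨w, hw, hκw⟩ := hann 1 (by norm_num) _ hκ hne
      apply hκw
      have e1 : ⁅⁅a', x⁆, w⁆ = ⁅a', ⁅x, w⁆⁆ := by
        rw [lie_lie, hzero ha' hw (by norm_num), lie_zero, sub_zero]
      have e2 : ⁅⁅a, ⁅a', x⁆⁆, w⁆ = ⁅a, ⁅a', ⁅x, w⁆⁆⁆ := by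
        rw [lie_lie, hzero ha hw (by norm_num), lie_zero, sub_zero, e1]
      rw [e2]
      have h3in : ⁅x, w⁆ ∈ L 0 := hLmem (k := 0) hx hw (by norm_num)
      have h3 : ⁅a', ⁅x, w⁆⁆ ∈ L (-2) := hLmem ha' h3in (by norm_num)
      exact bSpan_eq_bot_apply hD0 ha h3
    have h3aii : L 1 ≤ brkL (L (-2)) (brkL (L (-2)) ⊥) := by
      rw [← hS1]
      apply bSpan_le
      intro u hu x hx a' ha'
      have e1 : ⁅a', ⁅u, x⁆⁆ = ⁅u, ⁅a', x⁆⁆ := by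
        rw [leibniz_lie, hzero ha' hu (by norm_num), zero_lie, zero_add]
      show ⁅a', ⁅u, x⁆⁆ ∈ brkL (L (-2)) ⊥
      rw [e1]
      intro a ha
      rw [Submodule.mem_bot, leibniz_lie, hzero ha hu (by norm_num), zero_lie,
        h33 ha ha' hx, lie_zero, zero_add]
    have h3aiii : ∀ {a v : A}, a ∈ L (-2) → v ∈ L (-1) → ⁅a, v⁆ = 0 := by
      intro a v ha hv
      have hv' : v ∈ bSpan (L (-2)) (L 1) := by rw [hR]; exact hv
      have hind : bSpan (L (-2)) (L 1) ≤ brkL (L (-2)) ⊥ :=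
        bSpan_le fun a' ha' y hy => (h3aii hy) a' ha'
      exact Submodule.mem_bot F |>.mp ((hind hv') a ha)
    apply hm3
    rw [hD3]
    apply le_bot_iff.mp
    apply bSpan_le
    intro a ha v hv
    rw [Submodule.mem_bot]
    exact h3aiii ha hv
  have hPD : bSpan (bSpan (L (-2)) (L (-2))) (L 5) = L 1 := by
    have hle : bSpan (bSpan (L (-2)) (L (-2))) (L 5) ≤ L 1 :=
      bSpan_le fun d hd x hx => hLmem (hDle hd) hx (by norm_num)
    have hstab := bSpan_stab (F := F) (A := A)
      (bSpan_stab (stabL (-2)) (stabL (-2))) (stabL 5)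
    rcases hL1irr.2 _ hle hstab with h | h
    · exfalso
      have hann1 : L 1 ≤ brkL (bSpan (L (-2)) (L (-2))) ⊥ := by
        rw [← hS1]
        apply bSpan_le
        intro u hu x hx d hd
        have hh1 : ⁅d, u⁆ = 0 := hzero (hDle hd) hu (by norm_num)
        have hh2 : ⁅d, x⁆ = 0 := bSpan_eq_bot_apply h hd hx
        rw [Submodule.mem_bot, leibniz_lie, hh1, hh2, zero_lie, lie_zero, zero_add]
      obtain ⟨d₀, hd₀, hd₀ne⟩ := (Submodule.ne_bot_iff _).mp hDne
      obtain ⟨y, hy, hyne⟩ := hvi 4 (by norm_num) d₀ (hDle hd₀) hd₀ne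
      apply hyne
      rw [← lie_skew]
      have hz : ⁅d₀, y⁆ = 0 := Submodule.mem_bot F |>.mp ((hann1 hy) d₀ hd₀)
      rw [hz, neg_zero]
    · exact h
  have h512 : bSpan (L (-2)) (L (-2)) = L (-4) := by
    refine le_antisymm hDle ?_
    rw [← hQ1]
    apply bSpan_le
    intro w hw y hy
    have hy' : y ∈ bSpan (bSpan (L (-2)) (L (-2))) (L 5) := by rw [hPD]; exact hy
    have hind : bSpan (bSpan (L (-2)) (L (-2))) (L 5) ≤
        brkL (L (-5)) (bSpan (L (-2)) (L (-2))) := by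
      apply bSpan_le
      intro d hd x hx w₁ hw₁
      have hh1 : ⁅w₁, d⁆ = 0 := hzero hw₁ (hDle hd) (by norm_num)
      rw [leibniz_lie, hh1, zero_lie, zero_add]
      have h0 : ⁅w₁, x⁆ ∈ L 0 := hLmem hw₁ hx (by norm_num)
      have h2 : ⁅⁅w₁, x⁆, d⁆ ∈ bSpan (L (-2)) (L (-2)) :=
        bSpan_stab (stabL (-2)) (stabL (-2)) (mem_bSpan h0 hd)
      rw [← lie_skew]
      exact Submodule.neg_mem _ h2
    exact (hind hy') w hw
  refine ⟨hS1, ?_, h512⟩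
  -- ============ (5.11) ============
  -- irreducibility of L (-4)
  have irr4 : ∀ U : Submodule F A, U ≤ L (-4) → bSpan (L 0) U ≤ U → U ≠ ⊥ → U = L (-4) := by
    intro U hUle hUstab hUne
    have hU5le : bSpan U (L 5) ≤ L 1 :=
      bSpan_le fun μ hμ x hx => hLmem (hUle hμ) hx (by norm_num)
    have hU5ne : bSpan U (L 5) ≠ ⊥ := by
      intro hU50
      have hkill : L 1 ≤ brkL U ⊥ := by
        rw [← hS1]
        apply bSpan_le
        intro u hu x hx μ hμ
        rw [Submodule.mem_bot, leibniz_lie, hzero (hUle hμ) hu (by norm_num), zero_lie,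
          bSpan_eq_bot_apply hU50 hμ hx, lie_zero, zero_add]
      obtain ⟨μ₀, hμ₀, hμ₀ne⟩ := (Submodule.ne_bot_iff _).mp hUne
      obtain ⟨y, hy, hyne⟩ := hvi 4 (by norm_num) μ₀ (hUle hμ₀) hμ₀ne
      apply hyne
      have hz : ⁅μ₀, y⁆ = 0 := Submodule.mem_bot F |>.mp ((hkill hy) μ₀ hμ₀)
      rw [← lie_skew, hz, neg_zero]
    have hU5 : bSpan U (L 5) = L 1 :=
      (hL1irr.2 _ hU5le (bSpan_stab hUstab (stabL 5))).resolve_left hU5ne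
    refine le_antisymm hUle ?_
    rw [← hQ1, ← hU5]
    apply bSpan_le
    intro w hw χ hχ
    have hind : bSpan U (L 5) ≤ brkL (L (-5)) U := by
      apply bSpan_le
      intro μ hμ x hx w₁ hw₁
      rw [leibniz_lie, hzero hw₁ (hUle hμ) (by norm_num), zero_lie, zero_add, ← lie_skew]
      exact Submodule.neg_mem _ (hUstab (mem_bSpan (hLmem hw₁ hx (by norm_num)) hμ))
    exact (hind hχ) w hw
  refine ⟨hm2, ?_⟩
  intro V hVle hVstab
  by_cases hV : V = ⊥
  · exact Or.inl hV
  right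
  -- [V, L 1] = L (-1)
  have hVL1 : bSpan V (L 1) = L (-1) := by
    have hle : bSpan V (L 1) ≤ L (-1) :=
      bSpan_le fun ξ hξ y hy => hLmem (hVle hξ) hy (by norm_num)
    have hne : bSpan V (L 1) ≠ ⊥ := by
      obtain ⟨ξ₀, hξ₀, hξ₀ne⟩ := (Submodule.ne_bot_iff _).mp hV
      obtain ⟨y, hy, hyne⟩ := hvi 2 (by norm_num) ξ₀ (hVle hξ₀) hξ₀ne
      intro hb
      apply hyne
      rw [← lie_skew, bSpan_eq_bot_apply hb hξ₀ hy, neg_zero]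
    exact (hB.2 _ hle (bSpan_stab hVstab (stabL 1))).resolve_left hne
  -- Ψ : [L (-5), [V, L 5]] ≤ V
  have hXle : bSpan V (L 5) ≤ L 3 :=
    bSpan_le fun ξ hξ x hx => hLmem (hVle hξ) hx (by norm_num)
  have hΨ' : bSpan V (L 5) ≤ brkL (L (-5)) V := by
    apply bSpan_le
    intro ξ hξ x hx w hw
    rw [leibniz_lie, hzero hw (hVle hξ) (by norm_num), zero_lie, zero_add, ← lie_skew]
    exact Submodule.neg_mem _ (hVstab (mem_bSpan (hLmem hw hx (by norm_num)) hξ))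
  have hΨ : bSpan (L (-5)) (bSpan V (L 5)) ≤ V :=
    bSpan_le fun w hw χ hχ => (hΨ' hχ) w hw
  -- [V, V] ≠ ⊥
  have hVsqNe : bSpan V V ≠ ⊥ := by
    intro hVsq0
    have h33V : ∀ {ξ ξ' x : A}, ξ ∈ V → ξ' ∈ V → x ∈ L 5 → ⁅ξ, ⁅ξ', x⁆⁆ = 0 := by
      intro ξ ξ' x hξ hξ' hx
      have hχ' : ⁅ξ', x⁆ ∈ L 3 := hLmem (k := 3) (hVle hξ') hx (by norm_num)
      have hκ : ⁅ξ, ⁅ξ', x⁆⁆ ∈ L 1 := hLmem (hVle hξ) hχ' (by norm_num)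
      by_contra hne
      obtain ⟨w, hw, hκw⟩ := hann 1 (by norm_num) _ hκ hne
      apply hκw
      have e1 : ⁅⁅ξ', x⁆, w⁆ = ⁅ξ', ⁅x, w⁆⁆ := by
        rw [lie_lie, hzero (hVle hξ') hw (by norm_num), lie_zero, sub_zero]
      have e2 : ⁅⁅ξ, ⁅ξ', x⁆⁆, w⁆ = ⁅ξ, ⁅ξ', ⁅x, w⁆⁆⁆ := by
        rw [lie_lie, hzero (hVle hξ) hw (by norm_num), lie_zero, sub_zero, e1]
      rw [e2]
      have h3 : ⁅ξ', ⁅x, w⁆⁆ ∈ V := by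
        rw [← lie_skew]
        exact Submodule.neg_mem _
          (hVstab (mem_bSpan (hLmem (k := 0) hx hw (by norm_num)) hξ'))
      exact bSpan_eq_bot_apply hVsq0 hξ h3
    have hbig : L 1 ≤ brkL V (brkL V ⊥) := by
      rw [← hS1]
      apply bSpan_le
      intro u hu x hx ξ' hξ'
      have e1 : ⁅ξ', ⁅u, x⁆⁆ = ⁅u, ⁅ξ', x⁆⁆ := by
        rw [leibniz_lie, hzero (hVle hξ') hu (by norm_num), zero_lie, zero_add]
      show ⁅ξ', ⁅u, x⁆⁆ ∈ brkL V ⊥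
      rw [e1]
      intro ξ hξ
      rw [Submodule.mem_bot, leibniz_lie, hzero (hVle hξ) hu (by norm_num), zero_lie,
        h33V hξ hξ' hx, lie_zero, zero_add]
    have hkillV : ∀ {ξ v : A}, ξ ∈ V → v ∈ L (-1) → ⁅ξ, v⁆ = 0 := by
      intro ξ v hξ hv
      have hv' : v ∈ bSpan V (L 1) := by rw [hVL1]; exact hv
      have hind : bSpan V (L 1) ≤ brkL V ⊥ :=
        bSpan_le fun ξ' hξ' y hy => (hbig hy) ξ' hξ'
      exact Submodule.mem_bot F |>.mp ((hind hv') ξ hξ)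
    obtain ⟨ξ₀, hξ₀, hξ₀ne⟩ := (Submodule.ne_bot_iff _).mp hV
    obtain ⟨v, hv, hvne⟩ := hF1 (-2) (by norm_num) ξ₀ (hVle hξ₀) hξ₀ne
    apply hvne
    rw [← lie_skew, hkillV hξ₀ hv, neg_zero]
  have hVsq : bSpan V V = L (-4) :=
    irr4 _ (bSpan_le fun ξ hξ ξ' hξ' => hLmem (hVle hξ) (hVle hξ') (by norm_num))
      (bSpan_stab hVstab hVstab) hVsqNe
  -- L 1 = [V, [V, L 5]]
  have hVX : bSpan V (bSpan V (L 5)) = L 1 := by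
    refine le_antisymm
      (bSpan_le fun ξ hξ χ hχ => hLmem (hVle hξ) (hXle hχ) (by norm_num)) ?_
    rw [← hS1, ← hVsq]
    apply bSpan_le
    intro d hd x hx
    have hind : bSpan V V ≤ brkR (L 5) (bSpan V (bSpan V (L 5))) := by
      apply bSpan_le
      intro ξ₁ hξ₁ ξ₂ hξ₂ x₁ hx₁
      rw [lie_lie]
      exact Submodule.sub_mem _ (mem_bSpan hξ₁ (mem_bSpan hξ₂ hx₁))
        (mem_bSpan hξ₂ (mem_bSpan hξ₁ hx₁))
    exact (hind hd) x hx
  -- L (-5) ≤ [V, [V, L (-1)]]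
  have h5V : L (-5) ≤ bSpan V (bSpan V (L (-1))) := by
    rw [hD5, ← hVsq]
    apply bSpan_le
    intro d hd v hv
    have hind : bSpan V V ≤ brkR (L (-1)) (bSpan V (bSpan V (L (-1)))) := by
      apply bSpan_le
      intro ξ₁ hξ₁ ξ₂ hξ₂ v₁ hv₁
      rw [lie_lie]
      exact Submodule.sub_mem _ (mem_bSpan hξ₁ (mem_bSpan hξ₂ hv₁))
        (mem_bSpan hξ₂ (mem_bSpan hξ₁ hv₁))
    exact (hind hd) v hv
  -- the boss: [[V, L (-1)], L 1] ≤ V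
  have hV3le : bSpan V (L (-1)) ≤ L (-3) :=
    bSpan_le fun ξ hξ v hv => hLmem (hVle hξ) hv (by norm_num)
  have hBoss' : bSpan V (bSpan V (L 5)) ≤ brkL (bSpan V (L (-1))) V := by
    apply bSpan_le
    intro ξ₃ hξ₃ χ hχ ζ hζ
    rw [leibniz_lie]
    apply Submodule.add_mem
    · exact hΨ (mem_bSpan (hLmem (hV3le hζ) (hVle hξ₃) (by norm_num)) hχ)
    · rw [← lie_skew]
      exact Submodule.neg_mem _
        (hVstab (mem_bSpan (hLmem (hV3le hζ) (hXle hχ) (by norm_num)) hξ₃))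
  have hBoss : bSpan (bSpan V (L (-1))) (L 1) ≤ V := by
    apply bSpan_le
    intro ζ hζ y hy
    have hy' : y ∈ bSpan V (bSpan V (L 5)) := by rw [hVX]; exact hy
    exact (hBoss' hy') ζ hζ
  -- finale : L (-2) ≤ V
  refine le_antisymm hVle ?_
  rw [← hQ3]
  apply bSpan_le
  intro w hw ρ hρ
  have hw' : w ∈ bSpan V (bSpan V (L (-1))) := h5V hw
  have hind : bSpan V (bSpan V (L (-1))) ≤ brkR (L 3) V := by
    apply bSpan_le
    intro ξ hξ ζ hζ ρ₁ hρ₁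
    rw [lie_lie]
    apply Submodule.sub_mem
    · rw [← lie_skew]
      exact Submodule.neg_mem _
        (hVstab (mem_bSpan (hLmem (hV3le hζ) hρ₁ (by norm_num)) hξ))
    · exact hBoss (mem_bSpan hζ (hLmem (hVle hξ) hρ₁ (by norm_num)))
  exact (hind hw') ρ hρ

end GradedLie
end
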